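/- Explicit formula for the twiddle operation (Lemma 6, first identity): For any linear operator X on V, the contour-integral twiddle X̃ := (2πi)^{−1} ∮_Γ (H − z)^{−1} X (H − z)^{−1} dz equals −Σ_{j=1}^m ( P_j X R̂_{λ_j} + R̂_{λ_j} X P_j ), where P_j is the spectral projection of H for the eigenvalue λ_j and R̂_{λ_j} := Σ_{μ ∈ σ(H), μ ∉ {λ₁,…,λ_m}} (μ − λ_j)^{−1} Π_μ is the reduced resolvent (Π_μ the spectral projection for eigenvalue μ). -/

import Mathlib

/-! On the circle the resolvent is `(H - z)⁻¹ = Σᵢ (μᵢ - z)⁻¹ Pᵢ`, so the integrand of `X̃` is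
`Σᵢₖ (μᵢ - z)⁻¹ (μₖ - z)⁻¹ Pᵢ X Pₖ`. By partial fractions and Cauchy's formula,
`(2πi)⁻¹ ∮ (μᵢ - z)⁻¹ (μₖ - z)⁻¹ dz = (𝟙ᵢ - 𝟙ₖ) / (μᵢ - μₖ)`, where `𝟙` indicates the eigenvalues
enclosed by the circle. Hence only the pairs with exactly one enclosed eigenvalue contribute, and
grouping them by the enclosed one produces the reduced resolvents. -/

open Complex Metric Set Real

section Idempotents

variable {R A ι : Type*} [CommSemiring R] [Semiring A] [Algebra R A] [Fintype ι] {e : ι → A}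

theorem sum_smul_mul_mul_sum_smul (f g : ι → R) (x : A) :
    (∑ i, f i • e i) * x * (∑ k, g k • e k) = ∑ i, ∑ k, (f i * g k) • (e i * x * e k) := by
  simp only [Finset.sum_mul, Finset.mul_sum, Algebra.smul_mul_assoc, Algebra.mul_smul_comm,
    Finset.smul_sum, smul_smul, mul_comm (g _)]
  exact Finset.sum_comm

theorem OrthogonalIdempotents.sum_smul_mul_sum_smul (he : OrthogonalIdempotents e)
    (f g : ι → R) : (∑ i, f i • e i) * (∑ i, g i • e i) = ∑ i, (f i * g i) • e i := by
  classical
  simp only [Finset.mul_sum, Algebra.mul_smul_comm, Finset.sum_mul, Algebra.smul_mul_assoc,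
    he.mul_eq, smul_ite, smul_zero, Finset.sum_ite_eq', Finset.mem_univ, if_true, smul_smul,
    mul_comm (g _)]

theorem CompleteOrthogonalIdempotents.ring_inverse_sum_smul {K : Type*} [Semifield K]
    [Algebra K A] (he : CompleteOrthogonalIdempotents e) {f : ι → K} (hf : ∀ i, f i ≠ 0) :
    Ring.inverse (∑ i, f i • e i) = ∑ i, (f i)⁻¹ • e i := by
  have hone : ∀ g : ι → K, (∀ i, g i = 1) → ∑ i, g i • e i = 1 := fun g hg => by
    simp only [hg, one_smul, he.complete]
  have hright : (∑ i, f i • e i) * ∑ i, (f i)⁻¹ • e i = 1 := by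
    rw [he.sum_smul_mul_sum_smul]
    exact hone _ fun i => mul_inv_cancel₀ (hf i)
  have hleft : (∑ i, (f i)⁻¹ • e i) * ∑ i, f i • e i = 1 := by
    rw [he.sum_smul_mul_sum_smul]
    exact hone _ fun i => inv_mul_cancel₀ (hf i)
  exact Ring.inverse_unit ⟨_, _, hright, hleft⟩

end Idempotents

theorem Finset.sum_sum_eq_sum_sum_compl {α M : Type*} [Fintype α] [DecidableEq α]
    [AddCommMonoid M] (s : Finset α) {f : α → α → M}
    (hf : ∀ i k, (i ∈ s ↔ k ∈ s) → f i k = 0) :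
    ∑ i, ∑ k, f i k = ∑ i ∈ s, ∑ k ∈ sᶜ, (f i k + f k i) := by
  have hsplit : ∀ g : α → M, ∑ i, g i = ∑ i ∈ s, g i + ∑ i ∈ sᶜ, g i := fun g =>
    (sum_add_sum_compl s g).symm
  have hss : ∑ i ∈ s, ∑ k ∈ s, f i k = 0 :=
    sum_eq_zero fun i hi => sum_eq_zero fun k hk => hf i k (iff_of_true hi hk)
  have hcc : ∑ i ∈ sᶜ, ∑ k ∈ sᶜ, f i k = 0 :=
    sum_eq_zero fun i hi => sum_eq_zero fun k hk =>
      hf i k (iff_of_false (mem_compl.1 hi) (mem_compl.1 hk))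
  rw [hsplit]
  simp only [hsplit (f _), sum_add_distrib]
  rw [sum_comm (s := sᶜ) (t := s), hss, hcc, zero_add, add_zero]

theorem circleIntegral_sub_inv_of_notMem_closedBall {c w : ℂ} {r : ℝ} (hr : 0 ≤ r)
    (hw : w ∉ closedBall c r) : (∮ z in C(c, r), (z - w)⁻¹) = 0 := by
  have hne : ∀ z ∈ closedBall c r, z - w ≠ 0 := fun z hz =>
    sub_ne_zero.2 fun h => hw (h ▸ hz)
  refine circleIntegral_eq_zero_of_differentiable_on_off_countable hr countable_empty
    ((continuousOn_id.sub continuousOn_const).inv₀ hne) fun z hz => ?_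
  exact (differentiableAt_id.sub_const w).inv (hne z (ball_subset_closedBall hz.1))

theorem circleIntegral_sub_inv_eq_indicator {c w : ℂ} {r : ℝ} (hr : 0 ≤ r)
    (hw : w ∉ sphere c r) :
    (∮ z in C(c, r), (z - w)⁻¹) = 2 * π * I * (ball c r).indicator 1 w := by
  by_cases hwb : w ∈ ball c r
  · rw [indicator_of_mem hwb, Pi.one_apply, mul_one]
    exact circleIntegral.integral_sub_inv_of_mem_ball hwb
  · rw [indicator_of_notMem hwb, mul_zero]
    refine circleIntegral_sub_inv_of_notMem_closedBall hr fun hwc => ?_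
    rw [← ball_union_sphere] at hwc
    exact hwc.elim hwb hw

/-- For `a = b` both sides vanish, the right one because `(a - a)⁻¹ = 0`. -/
theorem two_pi_I_inv_mul_circleIntegral_inv_sub_mul_inv_sub {c a b : ℂ} {r : ℝ} (hr : 0 ≤ r)
    (ha : a ∉ sphere c r) (hb : b ∉ sphere c r) :
    (2 * π * I)⁻¹ * (∮ z in C(c, r), (a - z)⁻¹ * (b - z)⁻¹)
      = ((ball c r).indicator 1 a - (ball c r).indicator 1 b) / (a - b) := by
  have hflip : ∀ z : ℂ, (a - z)⁻¹ * (b - z)⁻¹ = (z - a)⁻¹ * (z - b)⁻¹ := fun z => by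
    rw [← neg_sub z a, ← neg_sub z b, inv_neg, inv_neg, neg_mul_neg]
  rcases eq_or_ne a b with rfl | hab
  · have hsq : ∀ z : ℂ, (z - a)⁻¹ * (z - a)⁻¹ = (z - a) ^ (-2 : ℤ) := fun z => by
      rw [zpow_neg, ← mul_inv, ← sq]
      norm_cast
    simp only [hflip, hsq, circleIntegral.integral_sub_zpow_of_ne (by decide : (-2 : ℤ) ≠ -1),
      sub_self, div_zero, mul_zero]
  · have hpartial : EqOn (fun z => (a - z)⁻¹ * (b - z)⁻¹)
        (fun z => (a - b)⁻¹ * ((z - a)⁻¹ - (z - b)⁻¹)) (sphere c r) := fun z hz => by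
      have hza : z - a ≠ 0 := sub_ne_zero.2 fun h => ha (h ▸ hz)
      have hzb : z - b ≠ 0 := sub_ne_zero.2 fun h => hb (h ▸ hz)
      simp only [hflip]
      field_simp
      ring
    have hint : ∀ w ∉ sphere c r, CircleIntegrable (fun z => (z - w)⁻¹) c r := fun w hw =>
      circleIntegrable_sub_inv_iff.2 (Or.inr (by rwa [abs_of_nonneg hr]))
    rw [circleIntegral.integral_congr hr hpartial, circleIntegral.integral_const_mul,
      circleIntegral.integral_sub (hint a ha) (hint b hb),
      circleIntegral_sub_inv_eq_indicator hr ha, circleIntegral_sub_inv_eq_indicator hr hb]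
    field_simp

section Twiddle

variable {ι A : Type*} [Fintype ι] [NormedRing A] [NormedAlgebra ℂ A]

noncomputable def twiddle (c : ℂ) (r : ℝ) (h x : A) : A :=
  (2 * π * I)⁻¹ • ∮ z in C(c, r), Ring.inverse (h - z • 1) * x * Ring.inverse (h - z • 1)

variable [CompleteSpace A] {e : ι → A} {c : ℂ} {r : ℝ} {a : ι → ℂ}

theorem twiddle_sum_smul (he : CompleteOrthogonalIdempotents e) (hr : 0 ≤ r)
    (ha : ∀ i, a i ∉ sphere c r) (x : A) :
    twiddle c r (∑ i, a i • e i) x = ∑ i, ∑ k,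
      (((ball c r).indicator 1 (a i) - (ball c r).indicator 1 (a k)) / (a i - a k)) •
        (e i * x * e k) := by
  have hsub : ∀ i, ∀ z ∈ sphere c r, a i - z ≠ 0 := fun i z hz =>
    sub_ne_zero.2 fun h => ha i (h ▸ hz)
  have hresolvent : ∀ z ∈ sphere c r,
      Ring.inverse (∑ i, a i • e i - z • 1) = ∑ i, (a i - z)⁻¹ • e i := fun z hz => by
    rw [← he.complete, Finset.smul_sum, ← Finset.sum_sub_distrib]
    simp only [← sub_smul]
    exact he.ring_inverse_sum_smul fun i => hsub i z hz
  have hexpand : EqOn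
      (fun z => Ring.inverse (∑ i, a i • e i - z • 1) * x * Ring.inverse (∑ i, a i • e i - z • 1))
      (fun z => ∑ i, ∑ k, ((a i - z)⁻¹ * (a k - z)⁻¹) • (e i * x * e k)) (sphere c r) :=
    fun z hz => by simp only [hresolvent z hz, sum_smul_mul_mul_sum_smul]
  have hcont : ∀ i k, ContinuousOn (fun z => ((a i - z)⁻¹ * (a k - z)⁻¹) • (e i * x * e k))
      (sphere c r) := fun i k =>
    (((continuousOn_const.sub continuousOn_id).inv₀ (hsub i)).mul
      ((continuousOn_const.sub continuousOn_id).inv₀ (hsub k))).smul continuousOn_const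
  rw [twiddle, circleIntegral.integral_congr hr hexpand,
    circleIntegral.integral_fun_sum fun i _ =>
      (continuousOn_finsetSum _ fun k _ => hcont i k).circleIntegrable hr, Finset.smul_sum]
  refine Finset.sum_congr rfl fun i _ => ?_
  rw [circleIntegral.integral_fun_sum fun k _ => (hcont i k).circleIntegrable hr,
    Finset.smul_sum]
  refine Finset.sum_congr rfl fun k _ => ?_
  rw [circleIntegral.integral_smul_const, smul_smul,
    two_pi_I_inv_mul_circleIntegral_inv_sub_mul_inv_sub hr (ha i) (ha k)]

theorem twiddle_sum_smul_eq_sum_sum_compl [DecidableEq ι] (he : CompleteOrthogonalIdempotents e)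
    (hr : 0 ≤ r) (s : Finset ι)
    (hin : ∀ i ∈ s, a i ∈ ball c r) (hout : ∀ i ∉ s, a i ∉ closedBall c r) (x : A) :
    twiddle c r (∑ i, a i • e i) x =
      ∑ i ∈ s, ∑ k ∈ sᶜ, (a i - a k)⁻¹ • (e i * x * e k + e k * x * e i) := by
  have hind : ∀ i, (ball c r).indicator 1 (a i) = if i ∈ s then (1 : ℂ) else 0 := fun i => by
    by_cases hi : i ∈ s
    · rw [indicator_of_mem (hin i hi), if_pos hi, Pi.one_apply]
    · rw [indicator_of_notMem fun h => hout i hi (ball_subset_closedBall h), if_neg hi]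
  have hsphere : ∀ i, a i ∉ sphere c r := fun i h => by
    by_cases hi : i ∈ s
    · exact (mem_ball_iff_norm.1 (hin i hi)).ne (mem_sphere_iff_norm.1 h)
    · exact hout i hi (sphere_subset_closedBall h)
  rw [twiddle_sum_smul he hr hsphere, Finset.sum_sum_eq_sum_sum_compl s]
  · refine Finset.sum_congr rfl fun i hi => Finset.sum_congr rfl fun k hk => ?_
    rw [Finset.mem_compl] at hk
    simp only [hind, hi, hk, if_true, if_false, smul_add]
    rw [sub_zero, zero_sub, neg_div, ← div_neg, neg_sub, one_div]
  · intro i k hik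
    rw [hind, hind, if_congr hik rfl rfl, sub_self, zero_div, zero_smul]

end Twiddle

theorem twiddle_explicit_formula_general
    {V : Type*} [NormedAddCommGroup V] [InnerProductSpace ℂ V] [FiniteDimensional ℂ V]
    (H : V →L[ℂ] V)
    (N : ℕ) (μs : Fin N → ℝ) (Pi : Fin N → V →L[ℂ] V)
    (hPiorth : ∀ i i', i ≠ i' → Pi i ∘L Pi i' = 0)
    (hPisum : ∑ i, Pi i = 1)
    (hHspec : H = ∑ i, (μs i : ℂ) • Pi i)
    (m : ℕ) (ι : Fin m → Fin N) (hι : Function.Injective ι)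
    (c : ℂ) (r : ℝ) (hr : 0 < r)
    (hin : ∀ j, ‖((μs (ι j) : ℂ)) - c‖ < r)
    (hout : ∀ i, (∀ j, ι j ≠ i) → r < ‖((μs i : ℂ)) - c‖)
    (X : V →L[ℂ] V) :
    let Rhat : Fin m → V →L[ℂ] V := fun j =>
      ∑ i ∈ Finset.univ.filter (fun i => ∀ j', ι j' ≠ i),
        (((μs i : ℂ) - (μs (ι j) : ℂ))⁻¹) • Pi i
    (2 * (Real.pi : ℂ) * Complex.I)⁻¹ •
        circleIntegral (fun z =>
          Ring.inverse (H - z • (1 : V →L[ℂ] V)) ∘L X ∘L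
            Ring.inverse (H - z • (1 : V →L[ℂ] V))) c r
      = -(∑ j, (Pi (ι j) ∘L X ∘L Rhat j + Rhat j ∘L X ∘L Pi (ι j))) := by
  intro Rhat
  have hP : CompleteOrthogonalIdempotents Pi :=
    CompleteOrthogonalIdempotents.iff_ortho_complete.2 ⟨hPiorth, hPisum⟩
  set s := Finset.univ.map ⟨ι, hι⟩
  have hsc : sᶜ = Finset.univ.filter (fun i => ∀ j', ι j' ≠ i) := by
    ext i; simp [s]
  -- `R ∘L (X ∘L R)` is definitionally `R * X * R`: composition is associative on the nose.
  change twiddle c r H X = _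
  rw [hHspec, twiddle_sum_smul_eq_sum_sum_compl hP hr.le s ?_ ?_, Finset.sum_map, hsc]
  · rw [← Finset.sum_neg_distrib]
    refine Finset.sum_congr rfl fun j _ => ?_
    simp only [Rhat, ← ContinuousLinearMap.mul_def, Finset.mul_sum, Finset.sum_mul, mul_smul_comm,
      smul_mul_assoc, mul_assoc, Function.Embedding.coeFn_mk, ← Finset.sum_add_distrib,
      ← Finset.sum_neg_distrib]
    refine Finset.sum_congr rfl fun k _ => ?_
    rw [← smul_add, ← neg_smul, ← inv_neg, neg_sub]
  · simp only [s, Finset.mem_map, Finset.mem_univ, true_and, Function.Embedding.coeFn_mk,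
      forall_exists_index, forall_apply_eq_imp_iff]
    exact fun j => mem_ball_iff_norm.2 (hin j)
  · intro i hi hball
    rw [← Finset.mem_compl, hsc, Finset.mem_filter] at hi
    exact (hout i hi.2).not_ge (mem_closedBall_iff_norm.1 hball)

/-- **Explicit formula for the twiddle operation (Lemma 6, first identity).**

`H` is a self-adjoint operator on a finite-dimensional complex inner product space with
spectral decomposition `H = Σᵢ μs i • Pi i` (`Pi i` orthogonal spectral projections,
pairwise orthogonal, summing to `1`, for distinct eigenvalues `μs i`).  The band
consists of the eigenvalues `μs (ι j)`, `j = 1, …, m` (`ι` injective), and `Γ` is a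
positively oriented circle of center `c` and radius `r` enclosing exactly these
eigenvalues and no other point of the spectrum.

Then for every operator `X`, the contour twiddle
`X̃ = (2πi)⁻¹ ∮_Γ (H−z)⁻¹ X (H−z)⁻¹ dz` equals
`−Σⱼ ( Pⱼ X R̂_{λⱼ} + R̂_{λⱼ} X Pⱼ )`, where `Pⱼ = Pi (ι j)` and
`R̂_{λⱼ} = Σ_{i ∉ range ι} (μs i − μs (ι j))⁻¹ • Pi i` is the reduced resolvent. -/
theorem twiddle_explicit_formula
    {V : Type*} [NormedAddCommGroup V] [InnerProductSpace ℂ V] [FiniteDimensional ℂ V]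
    (H : V →L[ℂ] V) (hH : IsSelfAdjoint H)
    (N : ℕ) (μs : Fin N → ℝ) (Pi : Fin N → V →L[ℂ] V)
    (hμinj : Function.Injective μs)
    (hPisa : ∀ i, IsSelfAdjoint (Pi i))
    (hPiidem : ∀ i, Pi i ∘L Pi i = Pi i)
    (hPine : ∀ i, Pi i ≠ 0)
    (hPiorth : ∀ i i', i ≠ i' → Pi i ∘L Pi i' = 0)
    (hPisum : ∑ i, Pi i = 1)
    (hHspec : H = ∑ i, (μs i : ℂ) • Pi i)
    (m : ℕ) (ι : Fin m → Fin N) (hι : Function.Injective ι)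
    (c : ℂ) (r : ℝ) (hr : 0 < r)
    (hin : ∀ j, ‖((μs (ι j) : ℂ)) - c‖ < r)
    (hout : ∀ i, (∀ j, ι j ≠ i) → r < ‖((μs i : ℂ)) - c‖)
    (X : V →L[ℂ] V) :
    let Rhat : Fin m → V →L[ℂ] V := fun j =>
      ∑ i ∈ Finset.univ.filter (fun i => ∀ j', ι j' ≠ i),
        (((μs i : ℂ) - (μs (ι j) : ℂ))⁻¹) • Pi i
    (2 * (Real.pi : ℂ) * Complex.I)⁻¹ •
        circleIntegral (fun z =>
          Ring.inverse (H - z • (1 : V →L[ℂ] V)) ∘L X ∘L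
            Ring.inverse (H - z • (1 : V →L[ℂ] V))) c r
      = -(∑ j, (Pi (ι j) ∘L X ∘L Rhat j + Rhat j ∘L X ∘L Pi (ι j))) :=
  twiddle_explicit_formula_general H N μs Pi hPiorth hPisum hHspec m ι hι c r hr hin hout X
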